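/- arXiv:math-ph/0207005 — 5 statements merged into one kernel-verified Lean document; each statement's English description precedes it below -/
import Mathlib

section
/- For complex numbers z_1, ..., z_n, the determinant det[z_j^k - z_j^{-k}]_{j,k=1..n} equals ∏_{j=1}^n (z_j - z_j^{-1}) · ∏_{1 ≤ j < k ≤ n} (z_k - z_j)(1 - 1/(z_j z_k)). -/
open Polynomial

/-- Monic Chebyshev-like polynomials: q 0 = 1, q 1 = X, q (n+2) = X * q (n+1) - q n. -/
noncomputable def qpoly : ℕ → Polynomial ℂ
  | 0 => 1
  | 1 => Polynomial.X
  | (n+2) => Polynomial.X * qpoly (n+1) - qpoly n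

lemma qpoly_monic_deg : ∀ n : ℕ, (qpoly n).Monic ∧ (qpoly n).natDegree = n := by
  intro n
  induction n using Nat.strong_induction_on with
  | _ n ih =>
    match n with
    | 0 => simp [qpoly, monic_one]
    | 1 => simp [qpoly, monic_X]
    | (m+2) =>
      obtain ⟨h1, h2⟩ := ih (m+1) (by omega)
      obtain ⟨h3, h4⟩ := ih m (by omega)
      have hmon : (Polynomial.X * qpoly (m+1)).Monic := (monic_X).mul h1
      have hdeg : (Polynomial.X * qpoly (m+1)).natDegree = m + 2 := by
        rw [natDegree_mul X_ne_zero h1.ne_zero, natDegree_X, h2]; omega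
      have hlt : (qpoly m).degree < (Polynomial.X * qpoly (m+1)).degree := by
        rw [Polynomial.degree_eq_natDegree hmon.ne_zero, hdeg]
        calc (qpoly m).degree ≤ (m : WithBot ℕ) := by
              simpa [h4] using Polynomial.degree_le_natDegree (p := qpoly m)
          _ < ((m + 2 : ℕ) : WithBot ℕ) := by exact_mod_cast by omega
      constructor
      · simpa [qpoly] using hmon.sub_of_left hlt
      · have := Polynomial.natDegree_sub_eq_left_of_natDegree_lt
          (p := Polynomial.X * qpoly (m+1)) (q := qpoly m) (by omega)
        simpa [qpoly, hdeg] using this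

lemma qpoly_eval (z : ℂ) (hz : z ≠ 0) :
    ∀ k : ℕ, (z - z⁻¹) * (qpoly k).eval (z + z⁻¹) = z ^ (k+1) - z⁻¹ ^ (k+1) := by
  intro k
  induction k using Nat.strong_induction_on with
  | _ k ih =>
    match k with
    | 0 => simp [qpoly]
    | 1 => simp [qpoly]; field_simp; ring
    | (m+2) =>
      have h1 := ih (m+1) (by omega)
      have h2 := ih m (by omega)
      have : (z - z⁻¹) * (qpoly (m+2)).eval (z + z⁻¹)
          = (z + z⁻¹) * ((z - z⁻¹) * (qpoly (m+1)).eval (z + z⁻¹))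
            - (z - z⁻¹) * (qpoly m).eval (z + z⁻¹) := by
        simp [qpoly]; ring
      rw [this, h1, h2]
      linear_combination (z ^ (m+1) - z⁻¹ ^ (m+1)) * mul_inv_cancel₀ hz

theorem typeC_weyl_denominator (n : ℕ) (z : Fin n → ℂ) (hz : ∀ j, z j ≠ 0) :
    Matrix.det (fun j k : Fin n => z j ^ ((k : ℕ) + 1) - (z j)⁻¹ ^ ((k : ℕ) + 1)) =
      (∏ j : Fin n, (z j - (z j)⁻¹)) *
        ∏ j : Fin n, ∏ k ∈ Finset.Ioi j, ((z k - z j) * (1 - 1 / (z j * z k))) := by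
  set x : Fin n → ℂ := fun j => z j + (z j)⁻¹ with hx
  have hM : (fun j k : Fin n => z j ^ ((k : ℕ) + 1) - (z j)⁻¹ ^ ((k : ℕ) + 1))
      = Matrix.of (fun j k : Fin n => (z j - (z j)⁻¹) * (qpoly k).eval (x j)) := by
    funext j k
    simp only [Matrix.of_apply, hx]
    rw [qpoly_eval (z j) (hz j)]
  rw [hM, show (Matrix.of fun j k : Fin n => (z j - (z j)⁻¹) * (qpoly k).eval (x j)) = Matrix.of fun j k => (fun j => z j - (z j)⁻¹) j * (Matrix.of fun j k : Fin n => (qpoly (k : ℕ)).eval (x j)) j k from rfl, Matrix.det_mul_column]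
  congr 1
  have := Matrix.det_eval_matrixOfPolynomials_eq_det_vandermonde x (fun k : Fin n => qpoly k)
    (fun i => (qpoly_monic_deg i).2) (fun i => (qpoly_monic_deg i).1)
  show (Matrix.of fun (j k : Fin n) => (qpoly (k : ℕ)).eval (x j)).det = _
  rw [← this, Matrix.det_vandermonde]
  refine Finset.prod_congr rfl fun j _ => Finset.prod_congr rfl fun k _ => ?_
  have hj := hz j; have hk := hz k
  simp only [Matrix.vandermonde, hx]
  field_simp
  ring
end

section
/- Let w: [-1/2, 1/2] → ℝ be integrable and set z_j = e^{2πi x_j}. Then N! · det[∫_{-1/2}^{1/2} w(x) z^{k-j} dx]_{j,k=1..N} = ∫_{-1/2}^{1/2}⋯∫_{-1/2}^{1/2} ∏_{l=1}^N w(x_l) ∏_{1≤j<k≤N} |z_j − z_k|^2 dx_1⋯dx_N, where in the Toeplitz matrix entry z = e^{2πi x}. -/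
open MeasureTheory Real Finset

noncomputable section HeineAux

private def ee (x : ℝ) : ℂ := Complex.exp (2 * π * Complex.I * x)

private lemma ee_ne_zero (x : ℝ) : ee x ≠ 0 := Complex.exp_ne_zero _

private lemma abs_ee (x : ℝ) : ‖ee x‖ = 1 := by
  have h : (2 * (π:ℂ) * Complex.I * (x:ℂ)) = ((2 * π * x : ℝ):ℂ) * Complex.I := by
    push_cast; ring
  rw [ee, h, Complex.norm_exp_ofReal_mul_I]

private lemma norm_ee_zpow (x : ℝ) (m : ℤ) : ‖ee x ^ m‖ = 1 := by
  rw [norm_zpow, abs_ee, one_zpow]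

private lemma cont_ee_zpow (m : ℤ) : Continuous (fun x : ℝ => ee x ^ m) := by
  have h : ∀ x : ℝ, ee x ^ m = Complex.exp ((m : ℂ) * (2 * π * Complex.I * x)) := by
    intro x
    rw [ee, ← Complex.exp_int_mul]
  simp only [h]
  exact Complex.continuous_exp.comp (by continuity)

private lemma vandermonde_sq (N : ℕ) (z : Fin N → ℂ) (hz : ∀ l, ‖z l‖ = 1) :
    (∏ j : Fin N, ∏ k ∈ Finset.Ioi j, ((‖z j - z k‖ ^ 2 : ℝ) : ℂ)) =
    ∑ σ : Equiv.Perm (Fin N), ∑ τ : Equiv.Perm (Fin N),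
      (((Equiv.Perm.sign σ : ℤ) : ℂ) * ((Equiv.Perm.sign τ : ℤ) : ℂ)) *
        ∏ l, z l ^ ((σ l : ℤ) - (τ l : ℤ)) := by
  have hz0 : ∀ l, z l ≠ 0 := by
    intro l h
    have := hz l
    rw [h] at this
    simp at this
  have hconj : ∀ l, (starRingEnd ℂ) (z l) = (z l)⁻¹ := by
    intro l
    refine eq_inv_of_mul_eq_one_right ?_
    rw [Complex.mul_conj, ← Complex.sq_norm, hz l]
    norm_num
  have key : ∀ a b : ℂ, ((‖a - b‖ ^ 2 : ℝ) : ℂ) =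
      (b - a) * ((starRingEnd ℂ) b - (starRingEnd ℂ) a) := by
    intro a b
    have : ((‖a - b‖ ^ 2 : ℝ) : ℂ) = (a - b) * (starRingEnd ℂ) (a - b) := by
      rw [Complex.sq_norm, Complex.mul_conj]
    rw [this, map_sub]
    ring
  have step1 : (∏ j : Fin N, ∏ k ∈ Finset.Ioi j, ((‖z j - z k‖ ^ 2 : ℝ) : ℂ)) =
      (Matrix.vandermonde z).det * (Matrix.vandermonde (fun l => (starRingEnd ℂ) (z l))).det := by
    rw [Matrix.det_vandermonde, Matrix.det_vandermonde, ← Finset.prod_mul_distrib]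
    refine Finset.prod_congr rfl fun j _ => ?_
    rw [← Finset.prod_mul_distrib]
    exact Finset.prod_congr rfl fun k _ => key (z j) (z k)
  rw [step1, Matrix.det_apply, Matrix.det_apply, Finset.sum_mul_sum]
  have term : ∀ σ τ : Equiv.Perm (Fin N),
      (Equiv.Perm.sign σ • ∏ i, Matrix.vandermonde z (σ i) i) *
        (Equiv.Perm.sign τ • ∏ i, Matrix.vandermonde (fun l => (starRingEnd ℂ) (z l)) (τ i) i) =
      (((Equiv.Perm.sign σ⁻¹ : ℤ) : ℂ) * ((Equiv.Perm.sign τ⁻¹ : ℤ) : ℂ)) *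
        ∏ l, z l ^ (((σ⁻¹ l : Fin N) : ℤ) - ((τ⁻¹ l : Fin N) : ℤ)) := by
    intro σ τ
    rw [Equiv.Perm.sign_inv, Equiv.Perm.sign_inv]
    have h1 : (∏ i, Matrix.vandermonde z (σ i) i) = ∏ l, z l ^ (((σ⁻¹ l : Fin N)) : ℕ) := by
      rw [← Equiv.prod_comp σ (fun l => z l ^ (((σ⁻¹ l : Fin N)) : ℕ))]
      simp [Matrix.vandermonde]
    have h2 : (∏ i, Matrix.vandermonde (fun l => (starRingEnd ℂ) (z l)) (τ i) i) =
        ∏ l, (z l)⁻¹ ^ (((τ⁻¹ l : Fin N)) : ℕ) := by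
      rw [← Equiv.prod_comp τ (fun l => (z l)⁻¹ ^ (((τ⁻¹ l : Fin N)) : ℕ))]
      simp [Matrix.vandermonde, hconj]
    have h3 : (∏ l, z l ^ (((σ⁻¹ l : Fin N)) : ℕ)) * ∏ l, (z l)⁻¹ ^ (((τ⁻¹ l : Fin N)) : ℕ) =
        ∏ l, z l ^ (((σ⁻¹ l : Fin N) : ℤ) - ((τ⁻¹ l : Fin N) : ℤ)) := by
      rw [← Finset.prod_mul_distrib]
      refine Finset.prod_congr rfl fun l _ => ?_
      rw [zpow_sub₀ (hz0 l), zpow_natCast, zpow_natCast, div_eq_mul_inv, inv_pow]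
    rw [h1, h2]
    simp only [Units.smul_def, zsmul_eq_mul]
    rw [← h3]
    ring
  calc (∑ σ : Equiv.Perm (Fin N), ∑ τ : Equiv.Perm (Fin N),
        (Equiv.Perm.sign σ • ∏ i, Matrix.vandermonde z (σ i) i) *
          (Equiv.Perm.sign τ • ∏ i, Matrix.vandermonde (fun l => (starRingEnd ℂ) (z l)) (τ i) i))
      = ∑ σ : Equiv.Perm (Fin N), ∑ τ : Equiv.Perm (Fin N),
          (((Equiv.Perm.sign σ⁻¹ : ℤ) : ℂ) * ((Equiv.Perm.sign τ⁻¹ : ℤ) : ℂ)) *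
            ∏ l, z l ^ (((σ⁻¹ l : Fin N) : ℤ) - ((τ⁻¹ l : Fin N) : ℤ)) := by
        exact Finset.sum_congr rfl fun σ _ => Finset.sum_congr rfl fun τ _ => term σ τ
    _ = ∑ σ : Equiv.Perm (Fin N), ∑ τ : Equiv.Perm (Fin N),
          (((Equiv.Perm.sign σ : ℤ) : ℂ) * ((Equiv.Perm.sign τ : ℤ) : ℂ)) *
            ∏ l, z l ^ ((σ l : ℤ) - (τ l : ℤ)) := by
        refine Fintype.sum_equiv (Equiv.inv (Equiv.Perm (Fin N))) _ _ fun σ => ?_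
        refine Fintype.sum_equiv (Equiv.inv (Equiv.Perm (Fin N))) _ _ fun τ => ?_
        simp [Equiv.inv_apply]

end HeineAux

theorem heine_identity_toeplitz (N : ℕ) (w : ℝ → ℝ)
    (hw : IntegrableOn w (Set.Icc (-(1:ℝ)/2) (1/2))) :
    (N.factorial : ℂ) *
      Matrix.det (fun j k : Fin N =>
        ∫ x in (-(1:ℝ)/2)..(1/2),
          (w x : ℂ) * Complex.exp (2 * π * Complex.I * x) ^ ((k : ℤ) - (j : ℤ))) =
    ∫ x : Fin N → ℝ in Set.univ.pi (fun _ => Set.Icc (-(1:ℝ)/2) (1/2)),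
      ((∏ l, (w (x l) : ℂ)) *
        ∏ j : Fin N, ∏ k ∈ Finset.Ioi j,
          ((‖Complex.exp (2 * π * Complex.I * (x j))
              - Complex.exp (2 * π * Complex.I * (x k))‖ ^ 2 : ℝ) : ℂ)) := by
  classical
  set I : Set ℝ := Set.Icc (-(1:ℝ)/2) (1/2) with hI
  set S : Set (Fin N → ℝ) := Set.univ.pi (fun _ => I) with hSdef
  have hS : MeasurableSet S := MeasurableSet.univ_pi (fun _ => measurableSet_Icc)
  set g : ℤ → ℝ → ℂ :=
    fun m => I.indicator (fun x => (w x : ℂ) * Complex.exp (2 * π * Complex.I * x) ^ m) with hg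
  have hwC : IntegrableOn (fun x => ((w x : ℝ) : ℂ)) I := hw.ofReal
  have hint : ∀ m : ℤ, Integrable (g m) := by
    intro m
    refine IntegrableOn.integrable_indicator ?_ measurableSet_Icc
    have hb : ∃ C, ∀ x : ℝ, ‖Complex.exp (2 * π * Complex.I * x) ^ m‖ ≤ C :=
      ⟨1, fun x => le_of_eq (norm_ee_zpow x m)⟩
    have := Integrable.bdd_mul hwC ((cont_ee_zpow m).aestronglyMeasurable.restrict) (ae_of_all _ (fun x => le_of_eq (norm_ee_zpow x m)))
    exact this.congr (Filter.Eventually.of_forall fun x => mul_comm _ _)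
  set c : ℤ → ℂ := fun m => ∫ x : ℝ, g m x with hc
  have hcval : ∀ m : ℤ,
      (∫ x in (-(1:ℝ)/2)..(1/2), (w x : ℂ) * Complex.exp (2 * π * Complex.I * x) ^ m) = c m := by
    intro m
    rw [hc]
    rw [intervalIntegral.integral_of_le (by norm_num), ← integral_Icc_eq_integral_Ioc,
      ← integral_indicator measurableSet_Icc]
  have hM : (fun j k : Fin N =>
      ∫ x in (-(1:ℝ)/2)..(1/2),
        (w x : ℂ) * Complex.exp (2 * π * Complex.I * x) ^ ((k : ℤ) - (j : ℤ))) =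
      fun j k : Fin N => c ((k : ℤ) - (j : ℤ)) := by
    funext j k
    exact hcval _
  rw [hM]
  have hdet : Matrix.det (fun j k : Fin N => c ((k : ℤ) - (j : ℤ))) =
      ∑ ρ : Equiv.Perm (Fin N),
        ((Equiv.Perm.sign ρ : ℤ) : ℂ) * ∏ i, c ((ρ i : ℤ) - (i : ℤ)) := by
    show Matrix.det (Matrix.of fun j k : Fin N => c ((k : ℤ) - (j : ℤ))) = _
    rw [← Matrix.det_transpose, Matrix.det_apply]
    refine Finset.sum_congr rfl fun ρ _ => ?_
    simp only [Units.smul_def, zsmul_eq_mul, Matrix.transpose_apply, Matrix.of_apply]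
  rw [hdet]
  -- pointwise identity
  have hpoint : ∀ x : Fin N → ℝ,
      S.indicator (fun y : Fin N → ℝ => (∏ l, (w (y l) : ℂ)) *
        ∏ j : Fin N, ∏ k ∈ Finset.Ioi j,
          ((‖Complex.exp (2 * π * Complex.I * (y j))
              - Complex.exp (2 * π * Complex.I * (y k))‖ ^ 2 : ℝ) : ℂ)) x =
      ∑ σ : Equiv.Perm (Fin N), ∑ τ : Equiv.Perm (Fin N),
        (((Equiv.Perm.sign σ : ℤ) : ℂ) * ((Equiv.Perm.sign τ : ℤ) : ℂ)) *
          ∏ l, g ((σ l : ℤ) - (τ l : ℤ)) (x l) := by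
    intro x
    by_cases hx : x ∈ S
    · have hmem : ∀ l, x l ∈ I := fun l => (Set.mem_univ_pi.mp hx) l
      have hgval : ∀ (m : ℤ) (l : Fin N),
          g m (x l) = (w (x l) : ℂ) * Complex.exp (2 * π * Complex.I * (x l)) ^ m :=
        fun m l => Set.indicator_of_mem (hmem l) _
      rw [Set.indicator_of_mem hx]
      rw [vandermonde_sq N (fun l => Complex.exp (2 * π * Complex.I * (x l)))
        (fun l => abs_ee (x l))]
      rw [Finset.mul_sum]
      refine Finset.sum_congr rfl fun σ _ => ?_
      rw [Finset.mul_sum]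
      refine Finset.sum_congr rfl fun τ _ => ?_
      rw [mul_left_comm]
      congr 1
      rw [← Finset.prod_mul_distrib]
      exact Finset.prod_congr rfl fun l _ => (hgval _ l).symm
    · rw [Set.indicator_of_notMem hx]
      have : ∃ l, x l ∉ I := by
        by_contra h
        push_neg at h
        exact hx (Set.mem_univ_pi.mpr h)
      obtain ⟨l, hl⟩ := this
      symm
      refine Finset.sum_eq_zero fun σ _ => Finset.sum_eq_zero fun τ _ => ?_
      rw [Finset.prod_eq_zero (Finset.mem_univ l) (Set.indicator_of_notMem hl _), mul_zero]
  have hterm_int : ∀ σ τ : Equiv.Perm (Fin N),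
      Integrable (fun x : Fin N → ℝ =>
        (((Equiv.Perm.sign σ : ℤ) : ℂ) * ((Equiv.Perm.sign τ : ℤ) : ℂ)) *
          ∏ l, g ((σ l : ℤ) - (τ l : ℤ)) (x l)) :=
    fun σ τ => (Integrable.fintype_prod (fun l => hint _)).const_mul _
  have h2 : (∫ x : Fin N → ℝ, ∑ σ : Equiv.Perm (Fin N), ∑ τ : Equiv.Perm (Fin N),
        (((Equiv.Perm.sign σ : ℤ) : ℂ) * ((Equiv.Perm.sign τ : ℤ) : ℂ)) *
          ∏ l, g ((σ l : ℤ) - (τ l : ℤ)) (x l)) =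
      ∑ σ : Equiv.Perm (Fin N), ∑ τ : Equiv.Perm (Fin N),
        (((Equiv.Perm.sign σ : ℤ) : ℂ) * ((Equiv.Perm.sign τ : ℤ) : ℂ)) *
          ∏ l, c ((σ l : ℤ) - (τ l : ℤ)) := by
    rw [integral_finset_sum _ (fun σ _ => integrable_finset_sum _ (fun τ _ => hterm_int σ τ))]
    refine Finset.sum_congr rfl fun σ _ => ?_
    rw [integral_finset_sum _ (fun τ _ => hterm_int σ τ)]
    refine Finset.sum_congr rfl fun τ _ => ?_
    rw [integral_const_mul]
    congr 1
    exact integral_fintype_prod_eq_prod (ι := Fin N)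
      (fun l (y : ℝ) => g ((σ l : ℤ) - (τ l : ℤ)) y)
  have hrhs : (∫ x : Fin N → ℝ in S,
      ((∏ l, (w (x l) : ℂ)) *
        ∏ j : Fin N, ∏ k ∈ Finset.Ioi j,
          ((‖Complex.exp (2 * π * Complex.I * (x j))
              - Complex.exp (2 * π * Complex.I * (x k))‖ ^ 2 : ℝ) : ℂ))) =
      ∑ σ : Equiv.Perm (Fin N), ∑ τ : Equiv.Perm (Fin N),
        (((Equiv.Perm.sign σ : ℤ) : ℂ) * ((Equiv.Perm.sign τ : ℤ) : ℂ)) *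
          ∏ l, c ((σ l : ℤ) - (τ l : ℤ)) := by
    rw [← integral_indicator hS, integral_congr_ae (Filter.Eventually.of_forall hpoint), h2]
  rw [hrhs]
  -- final combinatorial step
  have inner : ∀ τ : Equiv.Perm (Fin N),
      (∑ σ : Equiv.Perm (Fin N),
        (((Equiv.Perm.sign σ : ℤ) : ℂ) * ((Equiv.Perm.sign τ : ℤ) : ℂ)) *
          ∏ l, c ((σ l : ℤ) - (τ l : ℤ))) =
      ∑ ρ : Equiv.Perm (Fin N),
        ((Equiv.Perm.sign ρ : ℤ) : ℂ) * ∏ i, c ((ρ i : ℤ) - (i : ℤ)) := by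
    intro τ
    refine (Fintype.sum_equiv (Equiv.mulRight τ) _ _ fun ρ => ?_).symm
    simp only [Equiv.coe_mulRight]
    have hprod : (∏ l, c (((ρ * τ) l : ℤ) - (τ l : ℤ))) = ∏ i, c ((ρ i : ℤ) - (i : ℤ)) := by
      rw [← Equiv.prod_comp τ (fun i => c ((ρ i : ℤ) - (i : ℤ)))]
      simp [Equiv.Perm.mul_apply]
    have hsign : (((Equiv.Perm.sign (ρ * τ) : ℤ) : ℂ) * ((Equiv.Perm.sign τ : ℤ) : ℂ)) =
        ((Equiv.Perm.sign ρ : ℤ) : ℂ) := by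
      rw [Equiv.Perm.sign_mul]
      push_cast
      rcases Int.units_eq_one_or (Equiv.Perm.sign τ) with h | h <;> rw [h] <;> push_cast <;> ring
    rw [hprod, hsign]
  rw [Finset.sum_comm]
  simp_rw [inner]
  rw [Finset.sum_const, Finset.card_univ, Fintype.card_perm, Fintype.card_fin, nsmul_eq_mul]
end

section
/- For an integrable weight g: ℝ → ℝ and functions h_0, ..., h_{N-1} with all relevant integrals finite, N! · det[∫_ℝ g(t) h_{j-1}(t) h_{k-1}(t) dt]_{j,k=1..N} = ∫_ℝ⋯∫_ℝ ∏_{l=1}^N g(x_l) · (det[h_{j-1}(x_k)]_{j,k=1..N})^2 dx_1⋯dx_N. -/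
open MeasureTheory Equiv Finset

noncomputable def eps {N : ℕ} (σ : Equiv.Perm (Fin N)) : ℝ := ((Equiv.Perm.sign σ : ℤ) : ℝ)

lemma pointwise (N : ℕ) (g : ℝ → ℝ) (h : Fin N → ℝ → ℝ) (x : Fin N → ℝ) :
    (∏ l, g (x l)) * (Matrix.det (fun j k : Fin N => h j (x k))) ^ 2 =
    ∑ σ : Equiv.Perm (Fin N), ∑ τ : Equiv.Perm (Fin N),
      (eps σ * eps τ) * ∏ k, (g (x k) * h (σ k) (x k) * h (τ k) (x k)) := by
  show (∏ l, g (x l)) * (Matrix.det (Matrix.of fun j k : Fin N => h j (x k))) ^ 2 = _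
  rw [sq, Matrix.det_apply', Finset.sum_mul_sum, Finset.mul_sum]
  simp only [Matrix.of_apply]
  refine Finset.sum_congr rfl fun σ _ => ?_
  rw [Finset.mul_sum]
  refine Finset.sum_congr rfl fun τ _ => ?_
  have : ∏ k, (g (x k) * h (σ k) (x k) * h (τ k) (x k)) =
      (∏ k, g (x k)) * (∏ k, h (σ k) (x k)) * ∏ k, h (τ k) (x k) := by
    rw [← Finset.prod_mul_distrib, ← Finset.prod_mul_distrib]
  rw [this]; unfold eps; ring

theorem andreief_identity (N : ℕ) (g : ℝ → ℝ) (h : Fin N → ℝ → ℝ)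
    (hint : ∀ j k : Fin N, Integrable (fun t => g t * h j t * h k t))
    (hint2 : Integrable (fun x : Fin N → ℝ =>
      (∏ l, g (x l)) * (Matrix.det (fun j k : Fin N => h j (x k))) ^ 2)) :
    (N.factorial : ℝ) *
      Matrix.det (fun j k : Fin N => ∫ t : ℝ, g t * h j t * h k t) =
    ∫ x : Fin N → ℝ,
      (∏ l, g (x l)) * (Matrix.det (fun j k : Fin N => h j (x k))) ^ 2 := by
  set A : Matrix (Fin N) (Fin N) ℝ := fun j k => ∫ t : ℝ, g t * h j t * h k t with hA
  have step1 : (∫ x : Fin N → ℝ,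
      (∏ l, g (x l)) * (Matrix.det (fun j k : Fin N => h j (x k))) ^ 2) =
      ∑ σ : Equiv.Perm (Fin N), ∑ τ : Equiv.Perm (Fin N),
        (eps σ * eps τ) * ∏ k, A (σ k) (τ k) := by
    simp_rw [pointwise]
    rw [integral_finset_sum]
    · refine Finset.sum_congr rfl fun σ _ => ?_
      rw [integral_finset_sum]
      · refine Finset.sum_congr rfl fun τ _ => ?_
        rw [integral_const_mul, volume_pi,
          integral_fintype_prod_eq_prod (f := fun k t => g t * h (σ k) t * h (τ k) t)]
      · exact fun τ _ => ((Integrable.fintype_prod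
          (f := fun k t => g t * h (σ k) t * h (τ k) t)
          (fun k => hint (σ k) (τ k))).const_mul _)
    · exact fun σ _ => integrable_finset_sum _ fun τ _ =>
        ((Integrable.fintype_prod (f := fun k t => g t * h (σ k) t * h (τ k) t)
          (fun k => hint (σ k) (τ k))).const_mul _)
  rw [step1]
  have inner : ∀ σ : Equiv.Perm (Fin N),
      (∑ τ : Equiv.Perm (Fin N), (eps σ * eps τ) * ∏ k, A (σ k) (τ k)) = A.det := by
    intro σ
    rw [← Fintype.sum_equiv (Equiv.mulRight σ)
      (fun ρ => (eps σ * eps ((Equiv.mulRight σ) ρ)) * ∏ k, A (σ k) ((Equiv.mulRight σ) ρ k))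
      _ (fun ρ => rfl)]
    have : ∀ ρ : Equiv.Perm (Fin N),
        (eps σ * eps (ρ * σ)) * ∏ k, A (σ k) ((ρ * σ) k) = eps ρ * ∏ i, A i (ρ i) := by
      intro ρ
      have h1 : eps σ * eps (ρ * σ) = eps ρ := by
        unfold eps
        simp [Equiv.Perm.sign_mul]
        push_cast
        rcases Int.units_eq_one_or (Equiv.Perm.sign σ) with hs | hs <;>
          rcases Int.units_eq_one_or (Equiv.Perm.sign ρ) with hr | hr <;>
          simp [hs, hr]
      have h2 : ∏ k, A (σ k) ((ρ * σ) k) = ∏ i, A i (ρ i) := by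
        simpa using Equiv.prod_comp σ (fun i => A i (ρ i))
      rw [h1, h2]
    simp_rw [Equiv.coe_mulRight, this]
    rw [← Matrix.det_transpose A, Matrix.det_apply']
    rfl
  simp_rw [inner, Finset.sum_const, Finset.card_univ, Fintype.card_perm, Fintype.card_fin,
    nsmul_eq_mul]
end

section
/- Define a_0^C(x) = ∫_{-1/2}^{1/2} |e^{2πix/L} + e^{2πit}| · |1 + e^{2πit}| dt. Then a_0^C(x) = (4/π)[ sin(πx/L) + (π/2)(1 − 2x/L) cos(πx/L) ] for 0 ≤ x ≤ L. -/
open Real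

lemma abs_exp_add_exp' (α β : ℝ) :
    ‖Complex.exp ((α : ℂ) * Complex.I) + Complex.exp ((β : ℂ) * Complex.I)‖ =
      2 * |Real.cos ((α - β) / 2)| := by
  have e1 : (((α + β) / 2 : ℝ) : ℂ) * Complex.I + (((α - β) / 2 : ℝ) : ℂ) * Complex.I
      = (α : ℂ) * Complex.I := by push_cast; ring
  have e2 : (((α + β) / 2 : ℝ) : ℂ) * Complex.I + -(((α - β) / 2 : ℝ) : ℂ) * Complex.I
      = (β : ℂ) * Complex.I := by push_cast; ring
  have h : Complex.exp ((α : ℂ) * Complex.I) + Complex.exp ((β : ℂ) * Complex.I)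
      = Complex.exp ((((α + β) / 2 : ℝ) : ℂ) * Complex.I) *
        (2 * Complex.cos (((α - β) / 2 : ℝ) : ℂ)) := by
    rw [Complex.two_cos, mul_add, ← Complex.exp_add, ← Complex.exp_add, e1, e2]
  rw [h, norm_mul, Complex.norm_exp_ofReal_mul_I, one_mul, norm_mul, Complex.norm_two,
    ← Complex.ofReal_cos, Complex.norm_real, Real.norm_eq_abs]

lemma pi_mul_mono {u v : ℝ} (h : u ≤ v) : π * u ≤ π * v :=
  mul_le_mul_of_nonneg_left h Real.pi_pos.le

noncomputable def a0F (a t : ℝ) : ℝ :=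
  t * Real.cos (π * a) / 2 + Real.sin (2 * π * t - π * a) / (4 * π)

lemma a0F_hasDerivAt (a t : ℝ) :
    HasDerivAt (a0F a) (Real.cos (π * a - π * t) * Real.cos (π * t)) t := by
  have h1 : HasDerivAt (fun s : ℝ => s * Real.cos (π * a) / 2) (Real.cos (π * a) / 2) t := by
    simpa using ((hasDerivAt_id t).mul_const (Real.cos (π * a))).div_const 2
  have h2 : HasDerivAt (fun s : ℝ => 2 * π * s - π * a) (2 * π) t := by
    simpa using ((hasDerivAt_id t).const_mul (2 * π)).sub_const (π * a)
  have h3 : HasDerivAt (fun s : ℝ => Real.sin (2 * π * s - π * a))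
      (Real.cos (2 * π * t - π * a) * (2 * π)) t := (Real.hasDerivAt_sin _).comp t h2
  have h4 := (h1.add (h3.div_const (4 * π)))
  have key : Real.cos (π * a) / 2 + Real.cos (2 * π * t - π * a) * (2 * π) / (4 * π)
      = Real.cos (π * a - π * t) * Real.cos (π * t) := by
    have hπ : (π : ℝ) ≠ 0 := Real.pi_ne_zero
    rw [show (2 * π * t - π * a) = -(π * a - 2 * (π * t)) by ring,
      Real.cos_neg, Real.cos_sub, Real.cos_sub, Real.cos_two_mul, Real.sin_two_mul]
    field_simp
    ring
  rw [← key]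
  exact h4

lemma a0_integral_eval (a u v : ℝ) :
    (∫ t in u..v, Real.cos (π * a - π * t) * Real.cos (π * t)) = a0F a v - a0F a u := by
  apply intervalIntegral.integral_eq_sub_of_hasDerivAt (fun t _ => a0F_hasDerivAt a t)
  exact (Continuous.intervalIntegrable (by fun_prop) u v)

theorem a0_fourier_coefficient (L x : ℝ) (hL : 0 < L) (hx0 : 0 ≤ x) (hxL : x ≤ L) :
    (∫ t in (-(1:ℝ)/2)..(1/2),
        ‖Complex.exp (2 * π * Complex.I * (x / L)) + Complex.exp (2 * π * Complex.I * t)‖ *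
          ‖1 + Complex.exp (2 * π * Complex.I * t)‖) =
      (4 / π) * (Real.sin (π * x / L) + (π / 2) * (1 - 2 * x / L) * Real.cos (π * x / L)) := by
  have hπ : (0:ℝ) < π := Real.pi_pos
  set a : ℝ := x / L with ha
  have ha0 : 0 ≤ a := div_nonneg hx0 hL.le
  have ha1 : a ≤ 1 := (div_le_one hL).mpr hxL
  set c : ℝ := a - 1/2 with hc
  have hc1 : -(1:ℝ)/2 ≤ c := by simp only [hc]; linarith
  have hc2 : c ≤ 1/2 := by simp only [hc]; linarith
  clear_value a c
  -- Step 1: rewrite the integrand as a real function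
  have key : ∀ t : ℝ,
      ‖Complex.exp (2 * π * Complex.I * (x / L)) + Complex.exp (2 * π * Complex.I * t)‖ *
        ‖1 + Complex.exp (2 * π * Complex.I * t)‖
      = 4 * |Real.cos (π * a - π * t)| * |Real.cos (π * t)| := by
    intro t
    have r1 : (2 * (π:ℂ) * Complex.I * ((x:ℂ) / (L:ℂ))) = ((2 * π * a : ℝ) : ℂ) * Complex.I := by
      rw [ha]; push_cast; ring
    have r2 : (2 * (π:ℂ) * Complex.I * (t:ℂ)) = ((2 * π * t : ℝ) : ℂ) * Complex.I := by
      push_cast; ring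
    have r3 : (1:ℂ) = Complex.exp (((0:ℝ):ℂ) * Complex.I) := by simp
    rw [r1, r2, r3, abs_exp_add_exp', abs_exp_add_exp',
      show (2 * π * a - 2 * π * t) / 2 = π * a - π * t by ring,
      show ((0:ℝ) - 2 * π * t) / 2 = -(π * t) by ring, Real.cos_neg]
    ring
  rw [intervalIntegral.integral_congr (g := fun t => 4 * |Real.cos (π * a - π * t)| * |Real.cos (π * t)|)
    (fun t _ => key t)]
  -- Step 2: split the integral at c = a - 1/2
  have hcont : Continuous (fun t : ℝ => 4 * |Real.cos (π * a - π * t)| * |Real.cos (π * t)|) := by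
    fun_prop
  have hsplit : (∫ t in (-(1:ℝ)/2)..(1/2), 4 * |Real.cos (π * a - π * t)| * |Real.cos (π * t)|)
      = (∫ t in (-(1:ℝ)/2)..c, 4 * |Real.cos (π * a - π * t)| * |Real.cos (π * t)|)
        + ∫ t in c..(1/2), 4 * |Real.cos (π * a - π * t)| * |Real.cos (π * t)| :=
    (intervalIntegral.integral_add_adjacent_intervals
      (hcont.intervalIntegrable _ _) (hcont.intervalIntegrable _ _)).symm
  rw [hsplit]
  -- Step 3: remove absolute values on each piece
  have piece1 : (∫ t in (-(1:ℝ)/2)..c, 4 * |Real.cos (π * a - π * t)| * |Real.cos (π * t)|)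
      = ∫ t in (-(1:ℝ)/2)..c, -(4 * (Real.cos (π * a - π * t) * Real.cos (π * t))) := by
    apply intervalIntegral.integral_congr
    intro t ht
    rw [Set.uIcc_of_le hc1] at ht
    obtain ⟨ht1, ht2⟩ := ht
    have hcos1 : Real.cos (π * a - π * t) ≤ 0 := by
      apply Real.cos_nonpos_of_pi_div_two_le_of_le
      · linarith [pi_mul_mono (show (1:ℝ)/2 ≤ a - t by linarith)]
      · linarith [pi_mul_mono (show a - t ≤ (3:ℝ)/2 by linarith)]
    have hcos2 : 0 ≤ Real.cos (π * t) := by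
      apply Real.cos_nonneg_of_mem_Icc
      constructor
      · linarith [pi_mul_mono (show -(1:ℝ)/2 ≤ t by linarith)]
      · linarith [pi_mul_mono (show t ≤ (1:ℝ)/2 by linarith)]
    simp only [abs_of_nonpos hcos1, abs_of_nonneg hcos2]; ring
  have piece2 : (∫ t in c..(1/2:ℝ), 4 * |Real.cos (π * a - π * t)| * |Real.cos (π * t)|)
      = ∫ t in c..(1/2:ℝ), 4 * (Real.cos (π * a - π * t) * Real.cos (π * t)) := by
    apply intervalIntegral.integral_congr
    intro t ht
    rw [Set.uIcc_of_le hc2] at ht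
    obtain ⟨ht1, ht2⟩ := ht
    have hcos1 : 0 ≤ Real.cos (π * a - π * t) := by
      apply Real.cos_nonneg_of_mem_Icc
      constructor
      · linarith [pi_mul_mono (show -(1:ℝ)/2 ≤ a - t by linarith)]
      · linarith [pi_mul_mono (show a - t ≤ (1:ℝ)/2 by linarith)]
    have hcos2 : 0 ≤ Real.cos (π * t) := by
      apply Real.cos_nonneg_of_mem_Icc
      constructor
      · linarith [pi_mul_mono (show -(1:ℝ)/2 ≤ t by linarith)]
      · linarith [pi_mul_mono (show t ≤ (1:ℝ)/2 by linarith)]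
    simp only [abs_of_nonneg hcos1, abs_of_nonneg hcos2]; ring
  rw [piece1, piece2, intervalIntegral.integral_neg, intervalIntegral.integral_const_mul,
    intervalIntegral.integral_const_mul, a0_integral_eval, a0_integral_eval]
  -- Step 4: evaluate
  have s1 : Real.sin (2 * π * (1/2 : ℝ) - π * a) = Real.sin (π * a) := by
    rw [show 2 * π * (1/2 : ℝ) - π * a = π - π * a by ring, Real.sin_pi_sub]
  have s2 : Real.sin (2 * π * (-(1:ℝ)/2) - π * a) = Real.sin (π * a) := by
    rw [show 2 * π * (-(1:ℝ)/2) - π * a = -(π + π * a) by ring, Real.sin_neg,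
      Real.sin_add, Real.sin_pi, Real.cos_pi]
    ring
  have s3 : Real.sin (2 * π * c - π * a) = -Real.sin (π * a) := by
    rw [show 2 * π * c - π * a = -(π - π * a) by rw [hc]; ring, Real.sin_neg, Real.sin_pi_sub]
  have hxa : π * x / L = π * a := by rw [ha, mul_div_assoc]
  have hxa2 : 2 * x / L = 2 * a := by rw [ha, mul_div_assoc]
  rw [hxa, hxa2]
  simp only [a0F, s1, s2, s3]
  rw [hc]
  have hπ' : (π : ℝ) ≠ 0 := Real.pi_ne_zero
  field_simp
  ring
end

section
/- If a sequence of positive functions τ̄[n] on an open real interval satisfies τ̄[0] = 1 and the Toda equation δ² log τ̄[n] = τ̄[n−1]·τ̄[n+1] / τ̄[n]² for n ≥ 1, where δ = t(t−1) d/dt, then τ̄[n] = det[ δ^{j+k} τ̄[1] ]_{j,k=0,...,n−1} for all n ≥ 1. -/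
/-- The derivation δ = t(t-1) d/dt. -/
noncomputable def todaDelta (f : ℝ → ℝ) : ℝ → ℝ := fun t => t * (t - 1) * deriv f t

open Matrix

namespace TodaAux
variable {R : Type*} [CommRing R] {m : ℕ}

/-- index `m` in `Fin (m+2)` -/
def pp (m : ℕ) : Fin (m+2) := (Fin.last m).castSucc
/-- index `m+1` in `Fin (m+2)` -/
def qq (m : ℕ) : Fin (m+2) := Fin.last (m+1)

lemma pp_val : (pp m).val = m := rfl
lemma qq_val : (qq m).val = m + 1 := rfl
lemma pp_ne_qq : pp m ≠ qq m := by simp [pp, qq, Fin.ext_iff]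
lemma castAdd_ne_pp (j : Fin m) : Fin.castAdd 2 j ≠ pp m := by
  simp [pp, Fin.ext_iff]; omega
lemma castAdd_ne_qq (j : Fin m) : Fin.castAdd 2 j ≠ qq m := by
  simp [qq, Fin.ext_iff]; omega

lemma det_one_update_two_cols (u v : Fin (m+2) → R) :
    (((1 : Matrix (Fin (m+2)) (Fin (m+2)) R).updateCol (pp m) u).updateCol (qq m) v).det
      = u (pp m) * v (qq m) - u (qq m) * v (pp m) := by
  set N := ((1 : Matrix (Fin (m+2)) (Fin (m+2)) R).updateCol (pp m) u).updateCol (qq m) v with hN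
  have he : N.det = (N.submatrix (finSumFinEquiv (m := m) (n := 2))
      (finSumFinEquiv (m := m) (n := 2))).det := (det_submatrix_equiv_self _ _).symm
  rw [he]
  have hblock : N.submatrix (finSumFinEquiv (m := m) (n := 2)) (finSumFinEquiv (m := m) (n := 2)) =
      fromBlocks 1 (fun i j => (![u, v] : Fin 2 → _) j (Fin.castAdd 2 i))
        0 (fun i j => (![u, v] : Fin 2 → _) j ((![pp m, qq m] : Fin 2 → _) i)) := by
    ext i j
    cases i with
    | inl i =>
      cases j with
      | inl j =>
        have hj := j.isLt
        simp [hN, updateCol_apply, castAdd_ne_qq j, castAdd_ne_pp j, fromBlocks,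
          one_apply, Fin.ext_iff]
      | inr j =>
        have hn0 : (Fin.natAdd m (0 : Fin 2)) = pp m := by simp [pp, Fin.ext_iff]
        have hn1 : (Fin.natAdd m (1 : Fin 2)) = qq m := by simp [qq, Fin.ext_iff]
        fin_cases j <;>
          simp [hN, updateCol_apply, fromBlocks, hn0, hn1, pp_ne_qq, one_apply]
    | inr i =>
      cases j with
      | inl j =>
        have h1 : Fin.natAdd m i ≠ Fin.castAdd 2 j := by simp [Fin.ext_iff]; omega
        simp [hN, updateCol_apply, castAdd_ne_pp, castAdd_ne_qq, fromBlocks, one_apply, h1]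
      | inr j =>
        have hn0 : (Fin.natAdd m (0 : Fin 2)) = pp m := by simp [pp, Fin.ext_iff]
        have hn1 : (Fin.natAdd m (1 : Fin 2)) = qq m := by simp [qq, Fin.ext_iff]
        fin_cases i <;> fin_cases j <;>
          simp [hN, updateCol_apply, fromBlocks, hn0, hn1, pp_ne_qq, one_apply]
  rw [hblock]; refine (det_fromBlocks_zero₂₁ _ _ _).trans ?_
  rw [det_one, one_mul]; refine (det_fin_two _).trans ?_
  simp [pp, qq]
  ring

end TodaAux

namespace TodaAux2
open TodaAux
variable {R : Type*} [CommRing R] {m : ℕ}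

/-- weak Desnanot–Jacobi: `det A * (2×2 adjugate minor) = det A ^ 2 * inner minor`. -/
lemma weak_jacobi (A : Matrix (Fin (m+2)) (Fin (m+2)) R) :
    A.det * (adjugate A (pp m) (pp m) * adjugate A (qq m) (qq m)
        - adjugate A (qq m) (pp m) * adjugate A (pp m) (qq m))
      = A.det * (A.det * (A.submatrix (Fin.castAdd 2) (Fin.castAdd 2)).det) := by
  classical
  set u : Fin (m+2) → R := fun i => adjugate A i (pp m) with hu
  set v : Fin (m+2) → R := fun i => adjugate A i (qq m) with hv
  set N := ((1 : Matrix (Fin (m+2)) (Fin (m+2)) R).updateCol (pp m) u).updateCol (qq m) v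
    with hN
  have hdetN : N.det = u (pp m) * v (qq m) - u (qq m) * v (pp m) :=
    det_one_update_two_cols u v
  -- A * N = A with columns pp, qq replaced by det A • e_pp, det A • e_qq
  have hAN : A * N = (A.updateCol (pp m) (fun i => A.det * (1 : Matrix _ _ R) i (pp m))).updateCol
      (qq m) (fun i => A.det * (1 : Matrix _ _ R) i (qq m)) := by
    ext i k
    by_cases hk2 : k = qq m
    · subst hk2
      rw [mul_apply, updateCol_self]
      have : ∀ j, N j (qq m) = v j := fun j => by rw [hN, updateCol_self]
      simp only [this, hv]
      have := congrFun (congrFun (mul_adjugate A) i) (qq m)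
      simpa [mul_apply, smul_eq_mul, one_apply] using this
    · by_cases hk1 : k = pp m
      · subst hk1
        rw [mul_apply, updateCol_ne hk2, updateCol_self]
        have : ∀ j, N j (pp m) = u j := fun j => by
          rw [hN, updateCol_ne pp_ne_qq, updateCol_self]
        simp only [this, hu]
        have := congrFun (congrFun (mul_adjugate A) i) (pp m)
        simpa [mul_apply, smul_eq_mul, one_apply] using this
      · rw [mul_apply, updateCol_ne hk2, updateCol_ne hk1]
        have : ∀ j, N j k = (1 : Matrix _ _ R) j k := fun j => by
          rw [hN, updateCol_ne hk2, updateCol_ne hk1]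
        simp only [this]
        simp [one_apply, mul_apply, Finset.sum_ite_eq]
  have hswap : ∀ (M : Matrix (Fin (m+2)) (Fin (m+2)) R) (u v : Fin (m+2) → R),
      (M.updateCol (pp m) u).updateCol (qq m) v
        = (M.updateCol (qq m) v).updateCol (pp m) u := by
    intro M u v
    ext i k
    by_cases h2 : k = qq m
    · subst h2
      rw [updateCol_self, updateCol_ne pp_ne_qq.symm, updateCol_self]
    · by_cases h1 : k = pp m
      · subst h1
        rw [updateCol_ne pp_ne_qq, updateCol_self, updateCol_self]
      · rw [updateCol_ne h2, updateCol_ne h1, updateCol_ne h1, updateCol_ne h2]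
  have hdetAN : (A * N).det = A.det * (A.det *
      ((A.updateCol (pp m) (fun i => (1 : Matrix _ _ R) i (pp m))).updateCol (qq m)
        (fun i => (1 : Matrix _ _ R) i (qq m))).det) := by
    rw [hAN]
    rw [show (fun i => A.det * (1 : Matrix _ _ R) i (qq m))
        = A.det • (fun i => (1 : Matrix _ _ R) i (qq m)) from rfl]
    rw [det_updateCol_smul, hswap]
    rw [show (fun i => A.det * (1 : Matrix _ _ R) i (pp m))
        = A.det • (fun i => (1 : Matrix _ _ R) i (pp m)) from rfl]
    rw [det_updateCol_smul, hswap]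
  -- identify the inner minor
  have hE : ((A.updateCol (pp m) (fun i => (1 : Matrix _ _ R) i (pp m))).updateCol (qq m)
      (fun i => (1 : Matrix _ _ R) i (qq m))).det
      = (A.submatrix (Fin.castAdd 2) (Fin.castAdd 2)).det := by
    set E := (A.updateCol (pp m) (fun i => (1 : Matrix _ _ R) i (pp m))).updateCol (qq m)
      (fun i => (1 : Matrix _ _ R) i (qq m)) with hEdef
    have he : E.det = (E.submatrix (finSumFinEquiv (m := m) (n := 2))
        (finSumFinEquiv (m := m) (n := 2))).det := (det_submatrix_equiv_self _ _).symm
    rw [he]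
    have hblock : E.submatrix (finSumFinEquiv (m := m) (n := 2))
        (finSumFinEquiv (m := m) (n := 2)) =
        fromBlocks (A.submatrix (Fin.castAdd 2) (Fin.castAdd 2)) 0
          (fun i j => A (Fin.natAdd m i) (Fin.castAdd 2 j)) 1 := by
      ext i j
      have hn0 : (Fin.natAdd m (0 : Fin 2)) = pp m := by simp [pp, Fin.ext_iff]
      have hn1 : (Fin.natAdd m (1 : Fin 2)) = qq m := by simp [qq, Fin.ext_iff]
      cases i with
      | inl i =>
        cases j with
        | inl j =>
          simp [hEdef, updateCol_apply, castAdd_ne_qq j, castAdd_ne_pp j, fromBlocks]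
        | inr j =>
          have hip : Fin.castAdd 2 i ≠ pp m := castAdd_ne_pp i
          have hiq : Fin.castAdd 2 i ≠ qq m := castAdd_ne_qq i
          fin_cases j <;>
            simp [hEdef, updateCol_apply, fromBlocks, hn0, hn1, pp_ne_qq, one_apply, hip, hiq]
      | inr i =>
        cases j with
        | inl j =>
          simp [hEdef, updateCol_apply, castAdd_ne_qq j, castAdd_ne_pp j, fromBlocks]
        | inr j =>
          have hqp : qq m ≠ pp m := Ne.symm pp_ne_qq
          fin_cases i <;> fin_cases j <;>
            simp [hEdef, updateCol_apply, fromBlocks, hn0, hn1, pp_ne_qq, hqp, one_apply]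
    rw [hblock]; refine (det_fromBlocks_zero₁₂ _ _ _).trans ?_
    rw [det_one, mul_one]
  calc A.det * (adjugate A (pp m) (pp m) * adjugate A (qq m) (qq m)
        - adjugate A (qq m) (pp m) * adjugate A (pp m) (qq m))
      = A.det * N.det := by rw [hdetN]
    _ = (A * N).det := (det_mul A N).symm
    _ = A.det * (A.det * (A.submatrix (Fin.castAdd 2) (Fin.castAdd 2)).det) := by
        rw [hdetAN, hE]

end TodaAux2

namespace TodaAux3
open TodaAux TodaAux2 Polynomial
variable {R : Type*} [CommRing R] {m : ℕ}

lemma weak_jacobi_minors (A : Matrix (Fin (m+2)) (Fin (m+2)) R) :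
    A.det * ((A.submatrix (pp m).succAbove (pp m).succAbove).det *
        (A.submatrix (qq m).succAbove (qq m).succAbove).det
      - (A.submatrix (pp m).succAbove (qq m).succAbove).det *
        (A.submatrix (qq m).succAbove (pp m).succAbove).det)
      = A.det * (A.det * (A.submatrix (Fin.castAdd 2) (Fin.castAdd 2)).det) := by
  have h := weak_jacobi A
  rw [adjugate_fin_succ_eq_det_submatrix, adjugate_fin_succ_eq_det_submatrix,
    adjugate_fin_succ_eq_det_submatrix, adjugate_fin_succ_eq_det_submatrix] at h
  rw [← h]
  have hpp : ((pp m : Fin (m+2)) : ℕ) = m := rfl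
  have hqq : ((qq m : Fin (m+2)) : ℕ) = m + 1 := rfl
  rw [hpp, hqq]
  have e1 : ((-1 : R)) ^ (m + m) = 1 := Even.neg_one_pow ⟨m, rfl⟩
  have e2 : ((-1 : R)) ^ ((m+1) + (m+1)) = 1 := Even.neg_one_pow ⟨m+1, rfl⟩
  have o1 : ((-1 : R)) ^ (m + (m+1)) = -1 := Odd.neg_one_pow ⟨m, by ring⟩
  have o2 : ((-1 : R)) ^ ((m+1) + m) = -1 := Odd.neg_one_pow ⟨m, by ring⟩
  rw [e1, e2, o1, o2]
  ring

theorem jacobi_real (A : Matrix (Fin (m+2)) (Fin (m+2)) ℝ) :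
    (A.submatrix (pp m).succAbove (pp m).succAbove).det *
        (A.submatrix (qq m).succAbove (qq m).succAbove).det
      - (A.submatrix (pp m).succAbove (qq m).succAbove).det *
        (A.submatrix (qq m).succAbove (pp m).succAbove).det
      = A.det * (A.submatrix (Fin.castAdd 2) (Fin.castAdd 2)).det := by
  classical
  set B : Matrix (Fin (m+2)) (Fin (m+2)) ℝ[X] := Matrix.charmatrix (-A) with hB
  have hdetB : B.det ≠ 0 := by
    have : B.det = Matrix.charpoly (-A) := rfl
    rw [this]
    exact (Matrix.charpoly_monic (-A)).ne_zero
  have hstrongB : (B.submatrix (pp m).succAbove (pp m).succAbove).det *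
        (B.submatrix (qq m).succAbove (qq m).succAbove).det
      - (B.submatrix (pp m).succAbove (qq m).succAbove).det *
        (B.submatrix (qq m).succAbove (pp m).succAbove).det
      = B.det * (B.submatrix (Fin.castAdd 2) (Fin.castAdd 2)).det := by
    have h := weak_jacobi_minors B
    exact mul_left_cancel₀ hdetB h
  -- evaluate at 0
  have hmap : B.map (Polynomial.evalRingHom (0:ℝ)) = A := by
    ext i j
    by_cases hij : i = j
    · subst hij
      simp [hB, Matrix.charmatrix_apply_eq, Matrix.map_apply]
    · simp [hB, Matrix.charmatrix_apply_ne _ _ _ hij, Matrix.map_apply]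
  have happ := congrArg (Polynomial.evalRingHom (0:ℝ)) hstrongB
  simp only [map_sub, _root_.map_mul, RingHom.map_det, RingHom.mapMatrix_apply,
    ← Matrix.submatrix_map, hmap] at happ
  exact happ

end TodaAux3

open Matrix


namespace TodaAuxD
variable {m : ℕ}

lemma hasDerivAt_det_cols (A : Fin m → Fin m → ℝ → ℝ) (A' : Fin m → Fin m → ℝ) (t : ℝ)
    (h : ∀ j k, HasDerivAt (A j k) (A' j k) t) :
    HasDerivAt (fun s => Matrix.det (fun j k => A j k s))
      (∑ c : Fin m, Matrix.det (fun j k => if k = c then A' j k else A j k t)) t := by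
  classical
  have expand : (fun s => Matrix.det (fun j k => A j k s))
      = fun s => ∑ σ : Equiv.Perm (Fin m), (Equiv.Perm.sign σ : ℝ) * ∏ k, A (σ k) k s := by
    funext s
    exact Matrix.det_apply' _
  rw [expand]
  have hterm : ∀ σ : Equiv.Perm (Fin m),
      HasDerivAt (fun s => (Equiv.Perm.sign σ : ℝ) * ∏ k, A (σ k) k s)
        ((Equiv.Perm.sign σ : ℝ) *
          ∑ c : Fin m, (∏ k ∈ Finset.univ.erase c, A (σ k) k t) * A' (σ c) c) t := by
    intro σ
    have hp : HasDerivAt (fun s => ∏ k, A (σ k) k s)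
        (∑ c : Fin m, (∏ k ∈ Finset.univ.erase c, A (σ k) k t) • A' (σ c) c) t :=
      HasDerivAt.fun_finsetProd (fun c _ => h (σ c) c)
    simpa [smul_eq_mul] using hp.const_mul ((Equiv.Perm.sign σ : ℝ))
  have key : ∀ c : Fin m, (Matrix.det fun j k => if k = c then A' j k else A j k t)
      = ∑ σ : Equiv.Perm (Fin m), (Equiv.Perm.sign σ : ℝ) *
          ((∏ k ∈ Finset.univ.erase c, A (σ k) k t) * A' (σ c) c) := by
    intro c
    refine (Matrix.det_apply' _).trans ?_
    refine Finset.sum_congr rfl (fun σ _ => ?_)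
    congr 1
    rw [← Finset.mul_prod_erase Finset.univ _ (Finset.mem_univ c), if_pos rfl, mul_comm]
    congr 1
    exact Finset.prod_congr rfl (fun k hk => if_neg (Finset.ne_of_mem_erase hk))
  have hval : (∑ c : Fin m, Matrix.det fun j k => if k = c then A' j k else A j k t)
      = ∑ σ : Equiv.Perm (Fin m), (Equiv.Perm.sign σ : ℝ) *
          ∑ c : Fin m, (∏ k ∈ Finset.univ.erase c, A (σ k) k t) * A' (σ c) c := by
    rw [Finset.sum_congr rfl (fun c _ => key c), Finset.sum_comm]
    exact Finset.sum_congr rfl (fun σ _ => by rw [Finset.mul_sum])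
  rw [hval]
  exact HasDerivAt.fun_sum (fun σ (_ : σ ∈ Finset.univ) => hterm σ)

end TodaAuxD

namespace TodaAuxD

noncomputable def aIt (f : ℝ → ℝ) (i : ℕ) : ℝ → ℝ := todaDelta^[i] f

lemma contDiff_todaDelta {g : ℝ → ℝ} (hg : ContDiff ℝ (⊤ : ℕ∞) g) : ContDiff ℝ (⊤ : ℕ∞) (todaDelta g) := by
  have hd : ContDiff ℝ (⊤ : ℕ∞) (deriv g) := (contDiff_infty_iff_deriv.mp hg).2
  exact ((contDiff_id.mul (contDiff_id.sub contDiff_const)).mul hd : )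

lemma contDiff_aIt {f : ℝ → ℝ} (hf : ContDiff ℝ (⊤ : ℕ∞) f) (i : ℕ) : ContDiff ℝ (⊤ : ℕ∞) (aIt f i) := by
  induction i with
  | zero => exact hf
  | succ i ih => rw [aIt, Function.iterate_succ_apply']; exact contDiff_todaDelta ih

lemma hasDerivAt_aIt {f : ℝ → ℝ} (hf : ContDiff ℝ (⊤ : ℕ∞) f) (i : ℕ) (t : ℝ) :
    HasDerivAt (aIt f i) (deriv (aIt f i) t) t :=
  (((contDiff_aIt hf i).differentiable (by simp)) t).hasDerivAt

lemma aIt_succ (f : ℝ → ℝ) (i : ℕ) (t : ℝ) :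
    aIt f (i + 1) t = t * (t - 1) * deriv (aIt f i) t := by
  rw [aIt, Function.iterate_succ_apply']; rfl

noncomputable def W (f : ℝ → ℝ) (m : ℕ) (r c : Fin m → ℕ) : ℝ → ℝ :=
  fun t => Matrix.det (fun j k => aIt f (r j + c k) t)

/-- bump the value at one index -/
def bump (c : Fin m → ℕ) (k : Fin m) : Fin m → ℕ := fun k' => if k' = k then c k' + 1 else c k'

lemma W_hasDerivAt {f : ℝ → ℝ} (hf : ContDiff ℝ (⊤ : ℕ∞) f) (m : ℕ) (r c : Fin m → ℕ) (t : ℝ) :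
    HasDerivAt (W f m r c)
      (∑ k : Fin m, Matrix.det (fun j k' =>
        if k' = k then deriv (aIt f (r j + c k')) t else aIt f (r j + c k') t)) t :=
  hasDerivAt_det_cols (fun j k => aIt f (r j + c k)) (fun j k => deriv (aIt f (r j + c k)) t) t
    (fun j k => hasDerivAt_aIt hf _ t)

lemma W_differentiable {f : ℝ → ℝ} (hf : ContDiff ℝ (⊤ : ℕ∞) f) (m : ℕ) (r c : Fin m → ℕ) (t : ℝ) :
    DifferentiableAt ℝ (W f m r c) t := (W_hasDerivAt hf m r c t).differentiableAt

lemma todaDelta_W {f : ℝ → ℝ} (hf : ContDiff ℝ (⊤ : ℕ∞) f) (m : ℕ) (r c : Fin m → ℕ) (t : ℝ) :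
    todaDelta (W f m r c) t = ∑ k : Fin m, W f m r (bump c k) t := by
  have hd := (W_hasDerivAt hf m r c t).deriv
  show t * (t - 1) * deriv (W f m r c) t = _
  rw [hd, Finset.mul_sum]
  refine Finset.sum_congr rfl (fun k _ => ?_)
  -- pull the scalar into column k
  have h1 : (Matrix.det fun j k' =>
      if k' = k then deriv (aIt f (r j + c k')) t else aIt f (r j + c k') t)
      = ((Matrix.of fun j k' => aIt f (r j + c k') t).updateCol k
          (fun j => deriv (aIt f (r j + c k)) t)).det := by
    congr 1
    ext j k'
    rw [Matrix.updateCol_apply]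
    by_cases h : k' = k
    · subst h; simp
    · simp [h]
  have h2 : (W f m r (bump c k) t)
      = ((Matrix.of fun j k' => aIt f (r j + c k') t).updateCol k
          ((t * (t - 1)) • fun j => deriv (aIt f (r j + c k)) t)).det := by
    rw [W]
    congr 1
    ext j k'
    rw [Matrix.updateCol_apply]
    by_cases h : k' = k
    · subst h
      rw [if_pos rfl]
      show aIt f (r j + (if (k' : Fin m) = k' then c k' + 1 else c k')) t = _
      rw [if_pos rfl]
      simp only [Pi.smul_apply, smul_eq_mul]
      rw [← aIt_succ, ← add_assoc]
    · simp [h, bump]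
  rw [h1, h2, Matrix.det_updateCol_smul]

lemma W_symm (f : ℝ → ℝ) (m : ℕ) (r c : Fin m → ℕ) : W f m r c = W f m c r := by
  funext t
  rw [W, W]; refine (Matrix.det_transpose _).symm.trans ?_
  congr 1
  ext j k
  show aIt f (r k + c j) t = _
  rw [add_comm]

lemma W_zero_of_col_eq (f : ℝ → ℝ) (m : ℕ) (r c : Fin m → ℕ) {k₁ k₂ : Fin m}
    (hne : k₁ ≠ k₂) (hc : c k₁ = c k₂) (t : ℝ) : W f m r c t = 0 := by
  rw [W]
  exact Matrix.det_zero_of_column_eq hne (fun j => by rw [hc])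

lemma todaDelta_W_rows {f : ℝ → ℝ} (hf : ContDiff ℝ (⊤ : ℕ∞) f) (m : ℕ) (r c : Fin m → ℕ) (t : ℝ) :
    todaDelta (W f m r c) t = ∑ j : Fin m, W f m (bump r j) c t := by
  rw [W_symm, todaDelta_W hf]
  exact Finset.sum_congr rfl (fun j _ => by rw [W_symm])

end TodaAuxD


namespace TodaAuxD
open TodaAux TodaAux2 TodaAux3

variable {m : ℕ} {f : ℝ → ℝ}

noncomputable def Hk (f : ℝ → ℝ) (n : ℕ) : ℝ → ℝ := W f n (fun j => (j : ℕ)) (fun k => (k : ℕ))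

def c1 (m : ℕ) : Fin (m+1) → ℕ := fun k => if k = Fin.last m then m + 1 else (k : ℕ)

lemma bump_val_last : bump (fun k : Fin (m+1) => (k : ℕ)) (Fin.last m) = c1 m := by
  funext k
  by_cases h : k = Fin.last m
  · subst h; simp [bump, c1]
  · simp [bump, c1, h]

lemma bump_vanish (r : Fin (m+1) → ℕ) {k : Fin (m+1)} (hk : k ≠ Fin.last m) (t : ℝ) :
    W f (m+1) r (bump (fun k : Fin (m+1) => (k : ℕ)) k) t = 0 := by
  have hklt : (k : ℕ) < m :=
    lt_of_le_of_ne (Nat.lt_succ_iff.mp k.isLt) (fun h => hk (Fin.ext h))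
  set k2 : Fin (m+1) := ⟨(k : ℕ) + 1, by omega⟩ with hk2
  have hne : k ≠ k2 := by simp [Fin.ext_iff, hk2]
  refine W_zero_of_col_eq f (m+1) r _ hne ?_ t
  show (if k = k then (k:ℕ) + 1 else (k:ℕ)) = (if k2 = k then (k2:ℕ) + 1 else (k2:ℕ))
  rw [if_pos rfl, if_neg (Ne.symm hne)]

lemma delta_Hk_fun (hf : ContDiff ℝ (⊤ : ℕ∞) f) (m : ℕ) :
    todaDelta (Hk f (m+1)) = W f (m+1) (fun j => (j : ℕ)) (c1 m) := by
  funext t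
  rw [Hk, todaDelta_W hf]
  rw [Finset.sum_eq_single (Fin.last m)]
  · rw [bump_val_last]
  · intro k _ hk
    exact bump_vanish _ hk t
  · intro h; exact absurd (Finset.mem_univ _) h

lemma delta2_Hk (hf : ContDiff ℝ (⊤ : ℕ∞) f) (m : ℕ) (t : ℝ) :
    todaDelta (W f (m+1) (fun j => (j : ℕ)) (c1 m)) t = W f (m+1) (c1 m) (c1 m) t := by
  rw [todaDelta_W_rows hf]
  rw [Finset.sum_eq_single (Fin.last m)]
  · rw [bump_val_last]
  · intro k _ hk
    rw [W_symm]
    exact bump_vanish _ hk t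
  · intro h; exact absurd (Finset.mem_univ _) h

lemma pp_succAbove_val (j : Fin (m+1)) : (((pp m).succAbove j : Fin (m+2)) : ℕ) = c1 m j := by
  by_cases h : j = Fin.last m
  · subst h
    rw [Fin.succAbove_of_le_castSucc]
    · simp [c1]
    · rw [Fin.le_def]; simp [pp]
  · have hlt : (j : ℕ) < m :=
      lt_of_le_of_ne (Nat.lt_succ_iff.mp j.isLt) (fun hh => h (Fin.ext hh))
    rw [Fin.succAbove_of_castSucc_lt]
    · simp [c1, h]
    · rw [Fin.lt_def]; simpa [pp]

lemma qq_succAbove_val (j : Fin (m+1)) : (((qq m).succAbove j : Fin (m+2)) : ℕ) = (j : ℕ) := by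
  rw [qq, Fin.succAbove_last]
  simp

lemma bilinear (hf : ContDiff ℝ (⊤ : ℕ∞) f) (m : ℕ) (t : ℝ) :
    W f (m+1) (c1 m) (c1 m) t * Hk f (m+1) t
      - W f (m+1) (fun j => (j : ℕ)) (c1 m) t * W f (m+1) (fun j => (j : ℕ)) (c1 m) t
      = Hk f (m+2) t * Hk f m t := by
  have h := jacobi_real (m := m) (Matrix.of fun j k : Fin (m+2) => aIt f ((j : ℕ) + (k : ℕ)) t)
  have e1 : ((Matrix.of fun j k : Fin (m+2) => aIt f ((j : ℕ) + (k : ℕ)) t).submatrix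
      (pp m).succAbove (pp m).succAbove).det = W f (m+1) (c1 m) (c1 m) t := by
    rw [W]; congr 1; ext j k
    simp [Matrix.submatrix_apply, pp_succAbove_val]
  have e2 : ((Matrix.of fun j k : Fin (m+2) => aIt f ((j : ℕ) + (k : ℕ)) t).submatrix
      (qq m).succAbove (qq m).succAbove).det = Hk f (m+1) t := by
    rw [Hk, W]; congr 1; ext j k
    simp [Matrix.submatrix_apply, qq_succAbove_val]
  have e3 : ((Matrix.of fun j k : Fin (m+2) => aIt f ((j : ℕ) + (k : ℕ)) t).submatrix
      (pp m).succAbove (qq m).succAbove).det = W f (m+1) (c1 m) (fun j => (j : ℕ)) t := by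
    rw [W]; congr 1; ext j k
    simp [Matrix.submatrix_apply, pp_succAbove_val, qq_succAbove_val]
  have e4 : ((Matrix.of fun j k : Fin (m+2) => aIt f ((j : ℕ) + (k : ℕ)) t).submatrix
      (qq m).succAbove (pp m).succAbove).det = W f (m+1) (fun j => (j : ℕ)) (c1 m) t := by
    rw [W]; congr 1; ext j k
    simp [Matrix.submatrix_apply, pp_succAbove_val, qq_succAbove_val]
  have e5 : (Matrix.of fun j k : Fin (m+2) => aIt f ((j : ℕ) + (k : ℕ)) t).det
      = Hk f (m+2) t := rfl
  have e6 : ((Matrix.of fun j k : Fin (m+2) => aIt f ((j : ℕ) + (k : ℕ)) t).submatrix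
      (Fin.castAdd 2) (Fin.castAdd 2)).det = Hk f m t := by
    rw [Hk, W]; congr 1
  rw [e1, e2, e3, e4, e5, e6] at h
  rw [← h, W_symm f (m+1) (c1 m) (fun j => (j : ℕ))]

lemma log_lemma {g dg : ℝ → ℝ} {dd t : ℝ} {U : Set ℝ} (hU : IsOpen U) (htU : t ∈ U)
    (hg : ∀ s, HasDerivAt g (dg s) s)
    (hdd : HasDerivAt (fun s => todaDelta g s) dd t)
    (hpos : ∀ s ∈ U, 0 < g s) :
    todaDelta (todaDelta (fun s => Real.log (g s))) t
      = (g t * (t * (t - 1) * dd) - todaDelta g t * todaDelta g t) / (g t * g t) := by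
  have hgt := hpos t htU
  have hev : (fun s => todaDelta (fun x => Real.log (g x)) s)
      =ᶠ[nhds t] (fun s => todaDelta g s / g s) := by
    filter_upwards [hU.mem_nhds htU] with s hs
    show s * (s - 1) * deriv (fun x => Real.log (g x)) s = (s * (s - 1) * deriv g s) / g s
    rw [((hg s).log (ne_of_gt (hpos s hs))).deriv, (hg s).deriv]
    ring
  show t * (t - 1) * deriv (todaDelta (fun x => Real.log (g x))) t = _
  rw [hev.deriv_eq]
  have hdiv : HasDerivAt (fun s => todaDelta g s / g s)
      ((dd * g t - todaDelta g t * dg t) / (g t) ^ 2) t := hdd.div (hg t) (ne_of_gt hgt)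
  rw [hdiv.deriv]
  have hdg : todaDelta g t = t * (t - 1) * dg t := by
    show t * (t - 1) * deriv g t = _
    rw [(hg t).deriv]
  rw [hdg]
  field_simp

end TodaAuxD

theorem toda_determinant_solution (I : Set ℝ) (hI : IsOpen I)
    (τ : ℕ → ℝ → ℝ)
    (hsmooth : ∀ n, ContDiff ℝ (⊤ : ℕ∞) (τ n))
    (hpos : ∀ n, ∀ t ∈ I, 0 < τ n t)
    (hinit : ∀ t ∈ I, τ 0 t = 1)
    (htoda : ∀ n : ℕ, 1 ≤ n → ∀ t ∈ I,
      todaDelta (todaDelta (fun s => Real.log (τ n s))) t =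
        τ (n - 1) t * τ (n + 1) t / (τ n t) ^ 2) :
    ∀ n : ℕ, 1 ≤ n → ∀ t ∈ I,
      τ n t = Matrix.det (fun j k : Fin n => (todaDelta^[(j : ℕ) + (k : ℕ)] (τ 1)) t) := by
  classical
  open TodaAuxD in
  have hf : ContDiff ℝ (⊤ : ℕ∞) (τ 1) := (hsmooth 1).of_le (by simp)
  have main : ∀ n : ℕ, ∀ t ∈ I, τ n t = TodaAuxD.Hk (τ 1) n t := by
    intro n
    induction n using Nat.strong_induction_on with
    | _ n ih =>
      match n, ih with
      | 0, _ =>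
        intro t ht
        rw [hinit t ht]
        rw [TodaAuxD.Hk, TodaAuxD.W]; exact Matrix.det_isEmpty.symm
      | 1, _ =>
        intro t ht
        simp [TodaAuxD.Hk, TodaAuxD.W, Matrix.det_fin_one, TodaAuxD.aIt]
        exact (Matrix.det_fin_one (Matrix.of fun (j k : Fin 1) => τ 1 t)).symm
      | (m+2), ih =>
        intro t ht
        have h1 : ∀ s ∈ I, τ (m+1) s = TodaAuxD.Hk (τ 1) (m+1) s := ih (m+1) (by omega)
        have h0 : ∀ s ∈ I, τ m s = TodaAuxD.Hk (τ 1) m s := ih m (by omega)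
        have htoda' := htoda (m+1) (by omega) t ht
        -- replace τ (m+1) by Hk in the left-hand side
        have hev : (fun s => Real.log (τ (m+1) s))
            =ᶠ[nhds t] (fun s => Real.log (TodaAuxD.Hk (τ 1) (m+1) s)) := by
          filter_upwards [hI.mem_nhds ht] with s hs
          rw [h1 s hs]
        have hcongr : todaDelta (todaDelta (fun s => Real.log (τ (m+1) s))) t
            = todaDelta (todaDelta (fun s => Real.log (TodaAuxD.Hk (τ 1) (m+1) s))) t := by
          have h2 : todaDelta (fun s => Real.log (τ (m+1) s))
              =ᶠ[nhds t] todaDelta (fun s => Real.log (TodaAuxD.Hk (τ 1) (m+1) s)) := by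
            filter_upwards [hev.deriv] with s hs
            show s * (s - 1) * _ = s * (s - 1) * _
            rw [hs]
          show t * (t - 1) * deriv _ t = t * (t - 1) * deriv _ t
          rw [h2.deriv_eq]
        -- positivity of the determinants on I
        have hposH1 : ∀ s ∈ I, 0 < TodaAuxD.Hk (τ 1) (m+1) s := fun s hs =>
          h1 s hs ▸ hpos (m+1) s hs
        have hposH0 : ∀ s ∈ I, 0 < TodaAuxD.Hk (τ 1) m s := fun s hs =>
          h0 s hs ▸ hpos m s hs
        -- derivative data
        have hfun : todaDelta (TodaAuxD.Hk (τ 1) (m+1))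
            = TodaAuxD.W (τ 1) (m+1) (fun j => (j : ℕ)) (TodaAuxD.c1 m) :=
          TodaAuxD.delta_Hk_fun hf m
        have hgderiv : ∀ s, HasDerivAt (TodaAuxD.Hk (τ 1) (m+1))
            (deriv (TodaAuxD.Hk (τ 1) (m+1)) s) s := fun s =>
          ((TodaAuxD.W_differentiable hf (m+1) _ _ s).hasDerivAt :)
        set dd := deriv (TodaAuxD.W (τ 1) (m+1) (fun j => (j : ℕ)) (TodaAuxD.c1 m)) t with hdddef
        have hdd : HasDerivAt (fun s => todaDelta (TodaAuxD.Hk (τ 1) (m+1)) s) dd t := by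
          rw [show (fun s => todaDelta (TodaAuxD.Hk (τ 1) (m+1)) s)
              = TodaAuxD.W (τ 1) (m+1) (fun j => (j : ℕ)) (TodaAuxD.c1 m) from hfun]
          exact (TodaAuxD.W_differentiable hf (m+1) _ _ t).hasDerivAt
        have hlog := TodaAuxD.log_lemma hI ht hgderiv hdd hposH1
        -- identify second derivative
        have hδ2 : t * (t - 1) * dd = TodaAuxD.W (τ 1) (m+1) (TodaAuxD.c1 m) (TodaAuxD.c1 m) t := by
          have : t * (t - 1) * dd
              = todaDelta (TodaAuxD.W (τ 1) (m+1) (fun j => (j : ℕ)) (TodaAuxD.c1 m)) t := rfl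
          rw [this, TodaAuxD.delta2_Hk hf m t]
        have hδ1 : todaDelta (TodaAuxD.Hk (τ 1) (m+1)) t
            = TodaAuxD.W (τ 1) (m+1) (fun j => (j : ℕ)) (TodaAuxD.c1 m) t := by rw [hfun]
        rw [hδ2, hδ1] at hlog
        have hbil := TodaAuxD.bilinear hf m t
        -- put everything together
        rw [hcongr, hlog] at htoda'
        simp only [Nat.add_sub_cancel] at htoda'
        have hH1 : τ (m+1) t = TodaAuxD.Hk (τ 1) (m+1) t := h1 t ht
        have hH0 : τ m t = TodaAuxD.Hk (τ 1) m t := h0 t ht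
        rw [hH0, hH1] at htoda'
        have hne1 : TodaAuxD.Hk (τ 1) (m+1) t ≠ 0 := ne_of_gt (hposH1 t ht)
        have hne0 : TodaAuxD.Hk (τ 1) m t ≠ 0 := ne_of_gt (hposH0 t ht)
        -- htoda' : (H₁ * δ² - δ¹ * δ¹) / (H₁ * H₁) = H₀ * τ(m+2) / H₁ ^ 2
        rw [show TodaAuxD.Hk (τ 1) (m+1) t * TodaAuxD.W (τ 1) (m+1) (TodaAuxD.c1 m) (TodaAuxD.c1 m) t
            - TodaAuxD.W (τ 1) (m+1) (fun j => (j : ℕ)) (TodaAuxD.c1 m) t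
              * TodaAuxD.W (τ 1) (m+1) (fun j => (j : ℕ)) (TodaAuxD.c1 m) t
            = TodaAuxD.Hk (τ 1) (m+2) t * TodaAuxD.Hk (τ 1) m t from by rw [← hbil]; ring] at htoda'
        rw [div_eq_div_iff (by positivity) (by positivity)] at htoda'
        have hc : TodaAuxD.Hk (τ 1) (m+2) t * (TodaAuxD.Hk (τ 1) m t
              * (TodaAuxD.Hk (τ 1) (m+1) t * TodaAuxD.Hk (τ 1) (m+1) t))
            = τ (m+2) t * (TodaAuxD.Hk (τ 1) m t
              * (TodaAuxD.Hk (τ 1) (m+1) t * TodaAuxD.Hk (τ 1) (m+1) t)) := by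
          linear_combination htoda'
        exact (mul_right_cancel₀
          (mul_ne_zero hne0 (mul_ne_zero hne1 hne1)) hc).symm
  intro n _ t ht
  exact main n t ht
end
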